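/- arXiv:gr-qc/0208032 — 5 statements merged into one kernel-verified Lean document; each statement's English description precedes it below -/
import Mathlib

section
/- Let B : ℝ → ℝ be twice differentiable with B(x) > 0 for all x, let Ω̃ ∈ ℝ, and suppose B satisfies B'' = Ω̃² / B³. Then there exist constants B₀ > 0 and x₀ ∈ ℝ with B(x) = B₀·√(Ω² + (x − x₀)²) where Ω = Ω̃/B₀², provided Ω̃ ≠ 0. -/
/-!
Along a solution of `B'' = k / B³` the energy `E = B'² + k / B²` is conserved, and then
`(B²)'' = 2 B'² + 2 B B'' = 2 E`, so `B²` is a quadratic polynomial with leading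
coefficient `E`. Its discriminant is fixed by `E B² - (B B')² = k`, which gives
`B² = E (k / E² + (x - x₀)²)`; for `k = Ω̃² > 0` the energy is positive and `B₀ = √E`.
-/

lemma eq_of_forall_hasDerivAt_zero {f : ℝ → ℝ} (hf : ∀ x, HasDerivAt f 0 x) (x y : ℝ) :
    f x = f y :=
  is_const_of_deriv_eq_zero (fun z => (hf z).differentiableAt) (fun z => (hf z).deriv) x y

lemma eq_quadratic_of_hasDerivAt {f g : ℝ → ℝ} {c : ℝ} (hf : ∀ x, HasDerivAt f (g x) x)
    (hg : ∀ x, HasDerivAt g c x) (x : ℝ) :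
    f x = c / 2 * x ^ 2 + g 0 * x + f 0 := by
  have hg_lin : ∀ x, g x = c * x + g 0 := fun x => by
    have h : ∀ x, HasDerivAt (fun y => g y - c * y) 0 x := fun x => by
      simpa using (hg x).fun_sub ((hasDerivAt_id' x).const_mul c)
    linarith [eq_of_forall_hasDerivAt_zero h x 0]
  have h : ∀ x, HasDerivAt (fun y => f y - (c / 2 * y ^ 2 + g 0 * y)) 0 x := fun x => by
    refine ((hf x).fun_sub (((hasDerivAt_pow 2 x).const_mul (c / 2)).fun_add
      ((hasDerivAt_id' x).const_mul (g 0)))).congr_deriv ?_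
    rw [hg_lin x]
    push_cast
    ring
  linarith [eq_of_forall_hasDerivAt_zero h x 0]

section InverseCubeForce

variable {B v : ℝ → ℝ} {k : ℝ}

lemma energy_eq_energy_zero (hB : ∀ x, HasDerivAt B (v x) x)
    (hv : ∀ x, HasDerivAt v (k / B x ^ 3) x) (hne : ∀ x, B x ≠ 0) (x : ℝ) :
    v x ^ 2 + k / B x ^ 2 = v 0 ^ 2 + k / B 0 ^ 2 := by
  refine eq_of_forall_hasDerivAt_zero (f := fun y => v y ^ 2 + k / B y ^ 2) (fun x => ?_) x 0
  refine (((hv x).fun_pow 2).fun_add ((hasDerivAt_const x k).fun_div ((hB x).fun_pow 2)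
    (pow_ne_zero 2 (hne x)))).congr_deriv ?_
  have := hne x
  field_simp
  ring

lemma sq_eq_quadratic (hB : ∀ x, HasDerivAt B (v x) x)
    (hv : ∀ x, HasDerivAt v (k / B x ^ 3) x) (hne : ∀ x, B x ≠ 0) (x : ℝ) :
    B x ^ 2 = (v 0 ^ 2 + k / B 0 ^ 2) * x ^ 2 + 2 * (B 0 * v 0) * x + B 0 ^ 2 := by
  have hBv : ∀ x, HasDerivAt (fun y => 2 * (B y * v y)) (2 * (v 0 ^ 2 + k / B 0 ^ 2)) x :=
    fun x => by
      refine (((hB x).fun_mul (hv x)).const_mul 2).congr_deriv ?_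
      rw [← energy_eq_energy_zero hB hv hne x]
      have := hne x
      field_simp
  have hB2 : ∀ x, HasDerivAt (fun y => B y ^ 2) (2 * (B x * v x)) x :=
    fun x => ((hB x).fun_pow 2).congr_deriv <| by
      simp only [Nat.cast_ofNat, Nat.add_one_sub_one, pow_one]
      ring
  have := eq_quadratic_of_hasDerivAt hB2 hBv x
  linarith

lemma sq_eq_of_energy_pos (hB : ∀ x, HasDerivAt B (v x) x)
    (hv : ∀ x, HasDerivAt v (k / B x ^ 3) x) (hne : ∀ x, B x ≠ 0)
    (hE : 0 < v 0 ^ 2 + k / B 0 ^ 2) (x : ℝ) :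
    B x ^ 2 = (v 0 ^ 2 + k / B 0 ^ 2) *
      (k / (v 0 ^ 2 + k / B 0 ^ 2) ^ 2 + (x + B 0 * v 0 / (v 0 ^ 2 + k / B 0 ^ 2)) ^ 2) := by
  rw [sq_eq_quadratic hB hv hne x]
  set E := v 0 ^ 2 + k / B 0 ^ 2 with hE_def
  have hEB : E * B 0 ^ 2 = (B 0 * v 0) ^ 2 + k := by
    have := hne 0
    rw [hE_def]
    field_simp
  clear_value E
  field_simp
  linear_combination hEB

end InverseCubeForce

/-- General positive global solution of `B'' = Ω̃²/B³` (rotating extremal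
isolated-horizon constraint): `B(x) = B₀ √(Ω² + (x-x₀)²)` with `Ω = Ω̃/B₀²`. -/
theorem stmt2 (B : ℝ → ℝ) (Ω' : ℝ) (hΩ : Ω' ≠ 0)
    (hB1 : Differentiable ℝ B) (hB2 : Differentiable ℝ (deriv B))
    (hpos : ∀ x, 0 < B x)
    (hode : ∀ x, deriv (deriv B) x = Ω' ^ 2 / (B x) ^ 3) :
    ∃ B₀ x₀ : ℝ, 0 < B₀ ∧
      ∀ x, B x = B₀ * Real.sqrt ((Ω' / B₀ ^ 2) ^ 2 + (x - x₀) ^ 2) := by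
  have hB : ∀ x, HasDerivAt B (deriv B x) x := fun x => (hB1 x).hasDerivAt
  have hB' : ∀ x, HasDerivAt (deriv B) (Ω' ^ 2 / B x ^ 3) x :=
    fun x => hode x ▸ (hB2 x).hasDerivAt
  have hne : ∀ x, B x ≠ 0 := fun x => (hpos x).ne'
  set E := deriv B 0 ^ 2 + Ω' ^ 2 / B 0 ^ 2
  have hE : 0 < E := add_pos_of_nonneg_of_pos (sq_nonneg _)
    (div_pos (sq_pos_of_ne_zero hΩ) (pow_pos (hpos 0) 2))
  refine ⟨√E, -(B 0 * deriv B 0 / E), Real.sqrt_pos.2 hE, fun x => ?_⟩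
  rw [Real.sq_sqrt hE.le, div_pow, sub_neg_eq_add, ← Real.sqrt_mul hE.le,
    ← sq_eq_of_energy_pos hB hB' hne hE x, Real.sqrt_sq (hpos x).le]
end

section
/- Let Ω ≠ 0, B₀ > 0, E₀ ∈ ℂ, x₀ ∈ ℝ. The general solution Q(x) := 1/P(x)² of the linear ODE Q'' + (2(x−x₀)/((x−x₀)²+Ω²)) Q' + (4Ω²/((x−x₀)²+Ω²)²) Q = −16|E₀|²/(B₀⁴((x−x₀)²+Ω²)²) is Q(x) = (c₁(Ω² − (x−x₀)²) + 2c₂ Ω(x−x₀) − 8|E₀|²/B₀⁴)/(Ω² + (x−x₀)²) for constants c₁, c₂ ∈ ℝ; i.e., any function of this form solves the ODE. -/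
/-!
The equation is invariant under translation, so it suffices to take `x₀ = 0`. In the variable
`θ = arctan (u / Ω)` it reads `Q_θθ + 4 Q = -2 K / Ω²` with `K = 8 |E₀|² / B₀⁴`, whence the
homogeneous solutions `cos 2θ = (Ω² - u²) / (Ω² + u²)`, `sin 2θ = 2 Ω u / (Ω² + u²)` and the
particular solution `-K / (Ω² + u²) = -K (1 + cos 2θ) / (2 Ω²)`. The verification itself is a direct
computation of the first two derivatives of the rational profile.
-/

noncomputable section

variable (Ω K c₁ c₂ : ℝ)

def frameProfile (u : ℝ) : ℝ :=
  (c₁ * (Ω ^ 2 - u ^ 2) + 2 * c₂ * Ω * u - K) / (Ω ^ 2 + u ^ 2)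

def frameProfileDeriv (u : ℝ) : ℝ :=
  (2 * c₂ * Ω * (Ω ^ 2 - u ^ 2) - 4 * c₁ * Ω ^ 2 * u + 2 * K * u) / (Ω ^ 2 + u ^ 2) ^ 2

def frameProfileDeriv2 (u : ℝ) : ℝ :=
  (4 * c₂ * Ω * u ^ 3 - 12 * c₂ * Ω ^ 3 * u - 4 * c₁ * Ω ^ 4 + 12 * c₁ * Ω ^ 2 * u ^ 2
    + 2 * K * Ω ^ 2 - 6 * K * u ^ 2) / (Ω ^ 2 + u ^ 2) ^ 3

variable {Ω}

lemma hasDerivAt_frameProfile (hΩ : Ω ≠ 0) (u : ℝ) :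
    HasDerivAt (frameProfile Ω K c₁ c₂) (frameProfileDeriv Ω K c₁ c₂ u) u := by
  have hD : Ω ^ 2 + u ^ 2 ≠ 0 := by positivity
  have hnum : HasDerivAt (fun u => c₁ * (Ω ^ 2 - u ^ 2) + 2 * c₂ * Ω * u - K)
      (c₁ * (-(2 * u)) + 2 * c₂ * Ω) u := by
    simpa using ((((hasDerivAt_pow 2 u).const_sub (Ω ^ 2)).const_mul c₁).fun_add
      ((hasDerivAt_id u).const_mul (2 * c₂ * Ω))).sub_const K
  have hden : HasDerivAt (fun u => Ω ^ 2 + u ^ 2) (2 * u) u := by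
    simpa using (hasDerivAt_pow 2 u).const_add (Ω ^ 2)
  refine (hnum.div hden hD).congr_deriv ?_
  rw [frameProfileDeriv]
  field_simp
  ring

lemma hasDerivAt_frameProfileDeriv (hΩ : Ω ≠ 0) (u : ℝ) :
    HasDerivAt (frameProfileDeriv Ω K c₁ c₂) (frameProfileDeriv2 Ω K c₁ c₂ u) u := by
  have hD : Ω ^ 2 + u ^ 2 ≠ 0 := by positivity
  have hnum : HasDerivAt
      (fun u => 2 * c₂ * Ω * (Ω ^ 2 - u ^ 2) - 4 * c₁ * Ω ^ 2 * u + 2 * K * u)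
      (2 * c₂ * Ω * (-(2 * u)) - 4 * c₁ * Ω ^ 2 + 2 * K) u := by
    simpa using ((((hasDerivAt_pow 2 u).const_sub (Ω ^ 2)).const_mul (2 * c₂ * Ω)).fun_sub
      ((hasDerivAt_id u).const_mul (4 * c₁ * Ω ^ 2))).fun_add ((hasDerivAt_id u).const_mul (2 * K))
  have hden : HasDerivAt (fun u => (Ω ^ 2 + u ^ 2) ^ 2) (2 * (Ω ^ 2 + u ^ 2) * (2 * u)) u := by
    simpa using ((hasDerivAt_pow 2 u).const_add (Ω ^ 2)).fun_pow 2
  refine (hnum.div hden (pow_ne_zero 2 hD)).congr_deriv ?_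
  rw [frameProfileDeriv2]
  field_simp
  ring

theorem frameProfile_ode (hΩ : Ω ≠ 0) (u : ℝ) :
    deriv (deriv (frameProfile Ω K c₁ c₂)) u
      + (2 * u / (u ^ 2 + Ω ^ 2)) * deriv (frameProfile Ω K c₁ c₂) u
      + (4 * Ω ^ 2 / (u ^ 2 + Ω ^ 2) ^ 2) * frameProfile Ω K c₁ c₂ u
      = -(2 * K) / (u ^ 2 + Ω ^ 2) ^ 2 := by
  have hderiv : deriv (frameProfile Ω K c₁ c₂) = frameProfileDeriv Ω K c₁ c₂ :=
    funext fun v => (hasDerivAt_frameProfile K c₁ c₂ hΩ v).deriv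
  rw [hderiv, (hasDerivAt_frameProfileDeriv K c₁ c₂ hΩ u).deriv]
  have hD : u ^ 2 + Ω ^ 2 ≠ 0 := by positivity
  unfold frameProfile frameProfileDeriv frameProfileDeriv2
  field_simp
  ring

end

theorem stmt5_general (Ω B₀ x₀ c₁ c₂ : ℝ) (E₀ : ℂ) (hΩ : Ω ≠ 0) :
    let Q : ℝ → ℝ := fun x =>
      (c₁ * (Ω ^ 2 - (x - x₀) ^ 2) + 2 * c₂ * Ω * (x - x₀)
        - 8 * ‖E₀‖ ^ 2 / B₀ ^ 4) / (Ω ^ 2 + (x - x₀) ^ 2)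
    ∀ x : ℝ,
      deriv (deriv Q) x
        + (2 * (x - x₀) / ((x - x₀) ^ 2 + Ω ^ 2)) * deriv Q x
        + (4 * Ω ^ 2 / ((x - x₀) ^ 2 + Ω ^ 2) ^ 2) * Q x
      = -(16 * ‖E₀‖ ^ 2) / (B₀ ^ 4 * ((x - x₀) ^ 2 + Ω ^ 2) ^ 2) := by
  intro Q x
  set q := frameProfile Ω (8 * ‖E₀‖ ^ 2 / B₀ ^ 4) c₁ c₂
  have hQ : Q = fun x => q (x - x₀) := rfl
  have hderivQ : deriv Q = fun x => deriv q (x - x₀) :=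
    funext fun y => deriv_comp_sub_const q x₀ y
  rw [hderivQ, deriv_comp_sub_const, hQ, frameProfile_ode _ _ _ hΩ]
  generalize ((x - x₀) ^ 2 + Ω ^ 2) ^ 2 = d
  ring

/-- The proposed two-parameter family solves the linear ODE for `Q = 1/P²`
determining the frame function of the axisymmetric extremal electrovac IH. -/
theorem stmt5 (Ω B₀ x₀ c₁ c₂ : ℝ) (E₀ : ℂ) (hΩ : Ω ≠ 0) (hB₀ : 0 < B₀) :
    let Q : ℝ → ℝ := fun x =>
      (c₁ * (Ω ^ 2 - (x - x₀) ^ 2) + 2 * c₂ * Ω * (x - x₀)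
        - 8 * ‖E₀‖ ^ 2 / B₀ ^ 4) / (Ω ^ 2 + (x - x₀) ^ 2)
    ∀ x : ℝ,
      deriv (deriv Q) x
        + (2 * (x - x₀) / ((x - x₀) ^ 2 + Ω ^ 2)) * deriv Q x
        + (4 * Ω ^ 2 / ((x - x₀) ^ 2 + Ω ^ 2) ^ 2) * Q x
      = -(16 * ‖E₀‖ ^ 2) / (B₀ ^ 4 * ((x - x₀) ^ 2 + Ω ^ 2) ^ 2) :=
  stmt5_general Ω B₀ x₀ c₁ c₂ E₀ hΩ
end

section
/- Let Ψ₂, π, B : M → ℂ be smooth functions on a manifold with a complex derivation δ̄, with B real-valued and nowhere zero, satisfying π = −i δ̄U + δ̄ ln B for a real function U. If δ̄Ψ₂ + 3πΨ₂ = 0, then δ̄(Ψ₂ B³ e^{−3iU}) = 0; consequently if additionally δ (the conjugate derivation) annihilates it, Ψ₂ B³ e^{−3iU} is constant. -/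
/-- Bianchi identity `δ̄Ψ₂ + 3πΨ₂ = 0` with `π = -i δ̄U + δ̄B/B` implies
`δ̄(Ψ₂ B³ e^{-3iU}) = 0`; if moreover the conjugate derivation annihilates it,
`Ψ₂ B³ e^{-3iU}` is constant. -/
theorem stmt7 {M : Type*} (D Dc : (M → ℂ) → (M → ℂ))
    (hadd : ∀ f g : M → ℂ, D (f + g) = D f + D g)
    (hmul : ∀ f g : M → ℂ, D (f * g) = f * D g + g * D f)
    (hexp : ∀ f : M → ℂ,
      D (fun x => Complex.exp (f x)) = fun x => D f x * Complex.exp (f x))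
    (Ψ₂ : M → ℂ) (B U : M → ℝ) (hB : ∀ x, B x ≠ 0)
    (π' : M → ℂ)
    (hπ : ∀ x, π' x = -Complex.I * D (fun y => (U y : ℂ)) x
        + D (fun y => (B y : ℂ)) x / (B x : ℂ))
    (hbianchi : ∀ x, D Ψ₂ x + 3 * π' x * Ψ₂ x = 0)
    (hconst : ∀ g : M → ℂ, D g = 0 → Dc g = 0 → ∃ c, ∀ x, g x = c) :
    D (fun x => Ψ₂ x * (B x : ℂ) ^ 3
        * Complex.exp (-3 * Complex.I * (U x : ℂ))) = 0 ∧
    (Dc (fun x => Ψ₂ x * (B x : ℂ) ^ 3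
        * Complex.exp (-3 * Complex.I * (U x : ℂ))) = 0 →
      ∃ c, ∀ x, Ψ₂ x * (B x : ℂ) ^ 3
        * Complex.exp (-3 * Complex.I * (U x : ℂ)) = c) := by
  -- D kills 1
  have h1 : D (1 : M → ℂ) = 0 := by
    have h := hmul 1 1
    simp only [one_mul] at h
    funext x
    have := congrFun h x
    simp only [Pi.add_apply, Pi.zero_apply] at this ⊢
    linear_combination -this
  -- D kills -1
  have hneg1 : D (fun _ : M => (-1 : ℂ)) = 0 := by
    have key : ((fun _ : M => (-1:ℂ)) * (fun _ : M => (-1:ℂ))) = (1 : M → ℂ) := by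
      funext x; simp [Pi.mul_apply]
    have h := hmul (fun _ : M => (-1:ℂ)) (fun _ : M => (-1:ℂ))
    rw [key, h1] at h
    funext x
    have := congrFun h x
    simp only [Pi.add_apply, Pi.mul_apply, Pi.zero_apply] at this ⊢
    linear_combination this / 2
  -- D kills I
  have hI : D (fun _ : M => Complex.I) = 0 := by
    have key : ((fun _ : M => Complex.I) * (fun _ : M => Complex.I))
        = (fun _ : M => (-1 : ℂ)) := by
      funext x; simp [Pi.mul_apply, Complex.I_mul_I]
    have h := hmul (fun _ : M => Complex.I) (fun _ : M => Complex.I)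
    rw [key, hneg1] at h
    funext x
    have := congrFun h x
    simp only [Pi.add_apply, Pi.mul_apply, Pi.zero_apply] at this ⊢
    have h2 : Complex.I * D (fun _ : M => Complex.I) x = 0 := by
      linear_combination -this / 2
    exact (mul_eq_zero.mp h2).resolve_left Complex.I_ne_zero
  -- D kills 3
  have h3 : D (fun _ : M => (3 : ℂ)) = 0 := by
    have key : (fun _ : M => (3:ℂ)) = (1 : M → ℂ) + ((1 : M → ℂ) + (1 : M → ℂ)) := by
      funext x; norm_num
    rw [key, hadd, hadd, h1]
    simp
  -- D kills -3I
  have hc : D (fun _ : M => (-3 * Complex.I : ℂ)) = 0 := by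
    have key : (fun _ : M => (-3 * Complex.I : ℂ))
        = ((fun _ : M => (-1:ℂ)) * (fun _ : M => (3:ℂ))) * (fun _ : M => Complex.I) := by
      funext x; simp [Pi.mul_apply]
    rw [key, hmul, hmul, hI, hneg1, h3]
    funext x; simp
  set U' : M → ℂ := fun y => (U y : ℂ) with hU'
  set B' : M → ℂ := fun y => (B y : ℂ) with hB'
  -- D on the exponent
  have hcU : D (fun x => -3 * Complex.I * U' x)
      = fun x => -3 * Complex.I * D U' x := by
    have key : (fun x => -3 * Complex.I * U' x)
        = (fun _ : M => (-3 * Complex.I : ℂ)) * U' := rfl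
    rw [key, hmul, hc]
    funext x; simp [Pi.add_apply, Pi.mul_apply]
  set E : M → ℂ := fun x => Complex.exp (-3 * Complex.I * U' x) with hE
  have hDE : D E = fun x => -3 * Complex.I * D U' x * E x := by
    have h := hexp (fun x => -3 * Complex.I * U' x)
    rw [hcU] at h
    exact h
  -- D of B'*B'*B'
  have hDB3 : D (B' * B' * B') = fun x => 3 * B' x ^ 2 * D B' x := by
    rw [hmul, hmul]
    funext x
    simp only [Pi.add_apply, Pi.mul_apply]
    ring
  -- main claim
  have main : D (fun x => Ψ₂ x * (B x : ℂ) ^ 3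
      * Complex.exp (-3 * Complex.I * (U x : ℂ))) = 0 := by
    have key : (fun x => Ψ₂ x * (B x : ℂ) ^ 3
        * Complex.exp (-3 * Complex.I * (U x : ℂ)))
        = (Ψ₂ * (B' * B' * B')) * E := by
      funext x
      simp only [Pi.mul_apply, hE, hB', hU']
      ring
    rw [key, hmul, hmul, hDB3, hDE]
    funext x
    simp only [Pi.add_apply, Pi.mul_apply, Pi.zero_apply]
    have hb := hbianchi x
    have hp := hπ x
    have hDΨ : D Ψ₂ x = -(3 * π' x * Ψ₂ x) := by linear_combination hb
    rw [hDΨ, hp]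
    have hBx : (B x : ℂ) ≠ 0 := by exact_mod_cast hB x
    field_simp
    ring
  refine ⟨main, fun hDc => hconst _ main hDc⟩
end

section
/- Let Φ₁, B : M → ℂ be smooth with B real-valued nowhere zero, and π = −i δ̄U + δ̄ ln B for a real smooth function U, where δ̄ is a derivation satisfying the Leibniz rule. If δ̄Φ₁ + 2πΦ₁ = 0, then δ̄(Φ₁ B² e^{−2iU}) = 0. In particular, if Φ₁ B² e^{−2iU} = E₀ is constant, then Φ₁ either vanishes identically (E₀ = 0) or vanishes nowhere (E₀ ≠ 0). -/
/-- Maxwell constraint `δ̄Φ₁ + 2πΦ₁ = 0` with `π = -i δ̄U + δ̄B/B` gives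
`δ̄(Φ₁ B² e^{-2iU}) = 0`; if `Φ₁ B² e^{-2iU} = E₀` is constant, then `Φ₁`
vanishes identically (`E₀ = 0`) or vanishes nowhere (`E₀ ≠ 0`). -/
theorem stmt8 {M : Type*} (D : (M → ℂ) → (M → ℂ))
    (hadd : ∀ f g : M → ℂ, D (f + g) = D f + D g)
    (hmul : ∀ f g : M → ℂ, D (f * g) = f * D g + g * D f)
    (hexp : ∀ f : M → ℂ,
      D (fun x => Complex.exp (f x)) = fun x => D f x * Complex.exp (f x))
    (Φ₁ : M → ℂ) (B U : M → ℝ) (hB : ∀ x, B x ≠ 0)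
    (π' : M → ℂ)
    (hπ : ∀ x, π' x = -Complex.I * D (fun y => (U y : ℂ)) x
        + D (fun y => (B y : ℂ)) x / (B x : ℂ))
    (hmax : ∀ x, D Φ₁ x + 2 * π' x * Φ₁ x = 0) :
    D (fun x => Φ₁ x * (B x : ℂ) ^ 2
        * Complex.exp (-2 * Complex.I * (U x : ℂ))) = 0 ∧
    (∀ E₀ : ℂ,
      (∀ x, Φ₁ x * (B x : ℂ) ^ 2
          * Complex.exp (-2 * Complex.I * (U x : ℂ)) = E₀) →
      ((E₀ = 0 → ∀ x, Φ₁ x = 0) ∧ (E₀ ≠ 0 → ∀ x, Φ₁ x ≠ 0))) := by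
  have hBc : ∀ x, ((B x : ℂ)) ≠ 0 := fun x => by
    exact_mod_cast Complex.ofReal_ne_zero.mpr (hB x)
  -- derivations kill specific constants
  have hmul' : ∀ (c : ℂ) (f : M → ℂ),
      D (fun x => c * f x) = fun x => c * D f x + f x * D (fun _ => c) x := by
    intro c f
    have h := hmul (fun _ => c) f
    exact h
  have d1 : D (fun _ : M => (1 : ℂ)) = 0 := by
    have h := hmul (fun _ : M => (1:ℂ)) (fun _ => (1:ℂ))
    have e : ((fun _ : M => (1:ℂ)) * fun _ => (1:ℂ)) = fun _ : M => (1:ℂ) := by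
      funext y; simp
    rw [e] at h
    funext x
    have hx := congrFun h x
    simp only [Pi.mul_apply, Pi.add_apply, Pi.zero_apply] at hx ⊢
    linear_combination -hx
  have dneg1 : D (fun _ : M => (-1 : ℂ)) = 0 := by
    have h := hmul (fun _ : M => (-1:ℂ)) (fun _ => (-1:ℂ))
    have e : ((fun _ : M => (-1:ℂ)) * fun _ => (-1:ℂ)) = fun _ : M => (1:ℂ) := by
      funext y; simp
    rw [e, d1] at h
    funext x
    have hx := congrFun h x
    simp only [Pi.zero_apply, Pi.add_apply, Pi.mul_apply] at hx ⊢
    linear_combination (1/2 : ℂ) * hx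
  have dI : D (fun _ : M => Complex.I) = 0 := by
    have h := hmul (fun _ : M => Complex.I) (fun _ => Complex.I)
    have e : ((fun _ : M => Complex.I) * fun _ => Complex.I) = fun _ : M => (-1:ℂ) := by
      funext y; simp [Complex.I_mul_I]
    rw [e, dneg1] at h
    funext x
    have hx := congrFun h x
    simp only [Pi.zero_apply, Pi.add_apply, Pi.mul_apply] at hx ⊢
    linear_combination (Complex.I / 2) * hx + D (fun _ : M => Complex.I) x * Complex.I_sq
  have d2 : D (fun _ : M => (2 : ℂ)) = 0 := by
    have h := hadd (fun _ : M => (1:ℂ)) (fun _ => (1:ℂ))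
    have e : ((fun _ : M => (1:ℂ)) + fun _ => (1:ℂ)) = fun _ : M => (2:ℂ) := by
      funext y; norm_num
    rw [e, d1] at h
    rw [h]; funext x; simp
  have dm2I : D (fun _ : M => (-2 : ℂ) * Complex.I) = 0 := by
    have h := hmul (fun _ : M => (-1:ℂ) * 2) (fun _ => Complex.I)
    have e : ((fun _ : M => (-1:ℂ) * 2) * fun _ => Complex.I)
        = fun _ : M => (-2 : ℂ) * Complex.I := by
      funext y; simp only [Pi.mul_apply]; ring
    have dm2 : D (fun _ : M => (-1:ℂ) * 2) = 0 := by
      have h2 := hmul (fun _ : M => (-1:ℂ)) (fun _ => (2:ℂ))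
      have e2 : ((fun _ : M => (-1:ℂ)) * fun _ => (2:ℂ)) = fun _ : M => (-1:ℂ) * 2 := rfl
      rw [e2, dneg1, d2] at h2
      rw [h2]; funext x; simp
    rw [e, dI, dm2] at h
    rw [h]; funext x; simp
  -- scaling by -2I
  have dscale : ∀ f : M → ℂ, D (fun x => (-2 : ℂ) * Complex.I * f x)
      = fun x => (-2 : ℂ) * Complex.I * D f x := by
    intro f
    have h := hmul (fun _ : M => (-2:ℂ) * Complex.I) f
    have e : ((fun _ : M => (-2:ℂ) * Complex.I) * f)
        = fun x => (-2 : ℂ) * Complex.I * f x := rfl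
    rw [e, dm2I] at h
    rw [h]; funext x; simp
  set Bc : M → ℂ := fun x => (B x : ℂ) with hBcdef
  set Uc : M → ℂ := fun x => (U x : ℂ) with hUcdef
  set g : M → ℂ := fun x => (-2 : ℂ) * Complex.I * Uc x with hgdef
  set E : M → ℂ := fun x => Complex.exp (g x) with hEdef
  have hDE : D E = fun x => (-2:ℂ) * Complex.I * D Uc x * E x := by
    have h := hexp g
    rw [hEdef]
    rw [h, hgdef]
    funext x
    have := congrFun (dscale Uc) x
    simp only [this]
  have hDB2 : D (Bc * Bc) = fun x => 2 * Bc x * D Bc x := by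
    rw [hmul Bc Bc]; funext x; simp; ring
  -- main derivative
  have key : D (fun x => Φ₁ x * (B x : ℂ) ^ 2
      * Complex.exp (-2 * Complex.I * (U x : ℂ))) = 0 := by
    have eF : (fun x => Φ₁ x * (B x : ℂ) ^ 2
        * Complex.exp (-2 * Complex.I * (U x : ℂ)))
        = (Φ₁ * (Bc * Bc)) * E := by
      funext x
      simp only [Pi.mul_apply, hEdef, hgdef, hUcdef, hBcdef]
      ring_nf
    rw [eF, hmul (Φ₁ * (Bc * Bc)) E, hmul Φ₁ (Bc * Bc), hDE, hDB2]
    funext x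
    simp only [Pi.add_apply, Pi.mul_apply, Pi.zero_apply]
    have hm := hmax x
    have hp := hπ x
    rw [hp] at hm
    have hne := hBc x
    have hEne : E x ≠ 0 := Complex.exp_ne_zero _
    field_simp at hm
    have hb : ((B x : ℂ)) = Bc x := rfl
    rw [hb] at hm
    linear_combination (E x * Bc x) * hm
  refine ⟨key, ?_⟩
  intro E₀ hE₀
  constructor
  · intro h0 x
    have hx := hE₀ x
    rw [h0] at hx
    have hEne : Complex.exp (-2 * Complex.I * (U x : ℂ)) ≠ 0 := Complex.exp_ne_zero _
    have hB2 : ((B x : ℂ)) ^ 2 ≠ 0 := pow_ne_zero _ (hBc x)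
    rcases mul_eq_zero.mp hx with h | h
    · rcases mul_eq_zero.mp h with h' | h'
      · exact h'
      · exact absurd h' hB2
    · exact absurd h hEne
  · intro h0 x hΦ
    apply h0
    rw [← hE₀ x, hΦ]
    ring
end

section
/- Fix A > 0 and α ∈ [0,1), θ₀ ∈ ℝ, and define Φ₁(x) = e^{iθ₀} (2√π A^{3/2} α/(1+α²)) · ((A² − ((1−α²)/(1+α²))(8πx)²) + 2iA√((1−α²)/(1+α²))(8πx)) / (A² + ((1−α²)/(1+α²))(8πx)²)². Then the total charge integral (1/4π)∫_{S²} (⋆F + iF), which equals 2∫_{−A/8π}^{A/8π} Φ₁(x) dx (in the coordinates where the area form is 2 dφ dx), evaluates to e^{iθ₀} α √(A/(4π)). -/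
/-!
Writing `t = √k · 8πx`, the integrand is `e^{iθ₀} c / (A - it)²`: its numerator is `(A + it)²`
and its denominator `((A - it)(A + it))²`. This has the primitive `(ib)⁻¹ (A - ibx)⁻¹` with
`b = 8π√k`, so the integral over `[-L, L]` is `2L / (A² + b²L²)`, and with `L = A/8π`,
`1 + k = 2/(1 + α²)` what remains is arithmetic.
-/

open Complex Real intervalIntegral

theorem ofReal_sq_sub_sq_add_two_I_mul_div_sq (a t : ℝ) :
    (((a ^ 2 - t ^ 2 : ℝ) : ℂ) + 2 * I * ((a * t : ℝ) : ℂ)) / ((a ^ 2 + t ^ 2 : ℝ) : ℂ) ^ 2 =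
      (((a : ℂ) - I * t) ^ 2)⁻¹ := by
  by_cases h : (a : ℂ) - I * t = 0
  · have ha : a = 0 := by simpa using congrArg re h
    have ht : t = 0 := by simpa [ha] using congrArg im h
    simp [ha, ht]
  · have hconj : (a : ℂ) + I * t ≠ 0 := fun h' =>
      h (by simpa [sub_eq_add_neg] using congrArg (starRingEnd ℂ) h')
    have hnormSq : ((a ^ 2 + t ^ 2 : ℝ) : ℂ) = ((a : ℂ) - I * t) * ((a : ℂ) + I * t) := by
      push_cast; linear_combination (t : ℂ) ^ 2 * I_sq
    rw [hnormSq]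
    field_simp
    push_cast
    linear_combination (-(t : ℂ) ^ 2) * I_sq

theorem ofReal_sub_I_mul_ne_zero {a : ℝ} (ha : a ≠ 0) (t : ℝ) : (a : ℂ) - I * t ≠ 0 :=
  fun h => ha (by simpa using congrArg re h)

theorem hasDerivAt_inv_sub_I_mul {a b : ℝ} (ha : a ≠ 0) (hb : b ≠ 0) (x : ℝ) :
    HasDerivAt (fun y : ℝ => (I * b)⁻¹ * ((a : ℂ) - I * (b * y : ℝ))⁻¹)
      (((a : ℂ) - I * (b * x : ℝ)) ^ 2)⁻¹ x := by
  have hlin : HasDerivAt (fun y : ℝ => (a : ℂ) - I * (b * y : ℝ)) (-(I * b)) x := by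
    simpa [mul_assoc] using
      ((hasDerivAt_id x).ofReal_comp.const_mul (I * (b : ℂ))).const_sub (a : ℂ)
  have hb' : (b : ℂ) ≠ 0 := by exact_mod_cast hb
  exact ((hlin.inv (ofReal_sub_I_mul_ne_zero ha _)).const_mul (I * (b : ℂ))⁻¹).congr_deriv
    (by field_simp)

theorem integral_inv_sq_sub_I_mul {a : ℝ} (ha : a ≠ 0) (b L : ℝ) :
    ∫ x in -L..L, (((a : ℂ) - I * (b * x : ℝ)) ^ 2)⁻¹ =
      ((2 * L / (a ^ 2 + b ^ 2 * L ^ 2) : ℝ) : ℂ) := by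
  rcases eq_or_ne b 0 with rfl | hb
  · simp only [zero_mul, ofReal_zero, mul_zero, sub_zero, integral_const, real_smul]
    push_cast
    ring
  have hcont : Continuous fun x : ℝ => (((a : ℂ) - I * (b * x : ℝ)) ^ 2)⁻¹ :=
    ((continuous_const.sub (continuous_const.mul (continuous_ofReal.comp
      (continuous_const.mul continuous_id)))).pow 2).inv₀
      fun x => pow_ne_zero 2 (ofReal_sub_I_mul_ne_zero ha _)
  rw [integral_eq_sub_of_hasDerivAt (fun x _ => hasDerivAt_inv_sub_I_mul ha hb x)
    (hcont.intervalIntegrable _ _)]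
  have h₁ : (a : ℂ) - I * b * L ≠ 0 := by
    simpa [mul_assoc] using ofReal_sub_I_mul_ne_zero ha (b * L)
  have h₂ : (a : ℂ) + I * b * L ≠ 0 := by
    simpa [mul_assoc] using ofReal_sub_I_mul_ne_zero ha (b * -L)
  have hb' : (b : ℂ) ≠ 0 := by exact_mod_cast hb
  have hden : ((a ^ 2 + b ^ 2 * L ^ 2 : ℝ) : ℂ) ≠ 0 := by
    exact_mod_cast (by positivity : 0 < a ^ 2 + b ^ 2 * L ^ 2).ne'
  push_cast at hden ⊢
  simp only [mul_neg, ← mul_assoc, sub_neg_eq_add]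
  field_simp
  linear_combination 2 * I * (b : ℂ) ^ 3 * L ^ 3 * I_sq

theorem two_mul_prefactor_mul_integral_eq (A α : ℝ) (hA : 0 < A) :
    2 * (2 * √π * (A * √A) * α / (1 + α ^ 2) * (2 * (A / (8 * π)) /
        (A ^ 2 + (1 - α ^ 2) / (1 + α ^ 2) * (8 * π) ^ 2 * (A / (8 * π)) ^ 2))) =
      α * √(A / (4 * π)) := by
  have hsqrt : √(A / (4 * π)) = √A / (2 * √π) := by
    rw [sqrt_div hA.le, sqrt_mul zero_le_four, show (4 : ℝ) = 2 ^ 2 by norm_num,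
      sqrt_sq zero_le_two]
  have hπ : √π ^ 2 = π := sq_sqrt pi_pos.le
  have hπ₀ : 0 < √π := sqrt_pos.2 pi_pos
  rw [hsqrt]
  field_simp
  rw [hπ]
  ring

/-- The total charge integral of the axisymmetric extremal electrovac horizon:
`(1/4π)∮(⋆F + iF) = 2∫ Φ₁ dx = e^{iθ₀} α √(A/(4π))`. -/
theorem stmt14 (A α θ₀ : ℝ) (hA : 0 < A) (hα : α ∈ Set.Ico (0 : ℝ) 1) :
    let k : ℝ := (1 - α ^ 2) / (1 + α ^ 2)
    let Φ₁ : ℝ → ℂ := fun x =>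
      Complex.exp (Complex.I * (θ₀ : ℂ)) *
        ((2 * Real.sqrt Real.pi * (A * Real.sqrt A) * α / (1 + α ^ 2) : ℝ) : ℂ) *
        (((A ^ 2 - k * (8 * Real.pi * x) ^ 2 : ℝ) : ℂ)
          + 2 * Complex.I * ((A * Real.sqrt k * (8 * Real.pi * x) : ℝ) : ℂ)) /
        (((A ^ 2 + k * (8 * Real.pi * x) ^ 2 : ℝ) : ℂ)) ^ 2
    (2 : ℂ) * (∫ x in (-(A / (8 * Real.pi)))..(A / (8 * Real.pi)), Φ₁ x) =
      Complex.exp (Complex.I * (θ₀ : ℂ)) * (α : ℂ)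
        * ((Real.sqrt (A / (4 * Real.pi)) : ℝ) : ℂ) := by
  intro k Φ₁
  obtain ⟨hα0, hα1⟩ := hα
  have hk : 0 ≤ k := div_nonneg (by nlinarith) (by positivity)
  set b := √k * (8 * π)
  set c := 2 * √π * (A * √A) * α / (1 + α ^ 2)
  have hb : b ^ 2 = k * (8 * π) ^ 2 := by rw [mul_pow, sq_sqrt hk]
  have hΦ : ∀ x, Φ₁ x = cexp (I * θ₀) * c * (((A : ℂ) - I * (b * x : ℝ)) ^ 2)⁻¹ := by
    intro x
    have hsq : k * (8 * π * x) ^ 2 = (b * x) ^ 2 := by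
      rw [mul_pow b x, hb]; ring
    rw [← ofReal_sq_sub_sq_add_two_I_mul_div_sq, ← mul_div_assoc, ← hsq,
      show A * (b * x) = A * √k * (8 * π * x) by ring]
  simp only [hΦ, integral_const_mul, integral_inv_sq_sub_I_mul hA.ne']
  rw [mul_assoc _ (α : ℂ), ← ofReal_mul, ← two_mul_prefactor_mul_integral_eq A α hA, ← hb]
  push_cast [c]
  ring
end
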